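/- For an irreducible Markov chain on a finite state space reversible with respect to μ, and pairwise distinct states y, y₁, y₂, one has P_y(τ_{y₁} < τ_{y₂}) ≤ cap(y,y₁)/cap(y,y₂), where cap(z,w) := μ(z)·P_z(τ_w < τ_z⁺) and τ_z⁺ denotes the first return time to z. -/

import Mathlib

/-!
Write `ℓ = P_y(τ_{y₁} < τ_{y₂})`, `a = P_y(τ_{y₁} < τ_y⁺)` and `b = P_y(τ_{y₂} < τ_y⁺)`; the factors
`μ y` cancel. Splitting at the first return to `y` gives `ℓ ≤ a + r ℓ` with
`r = P_y(τ_y⁺ < τ_{y₂})`, and `r + b ≤ 1`, hence `ℓ b ≤ a`.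

Every state is hit almost surely, so each of these probabilities is the series of first-entrance
probabilities `((p killed on S) ^ n * p) y z`, and the splitting becomes a convolution identity
for powers of killed matrices. The σ-algebra on `X` is arbitrary, so we first show it is
discrete: if two states `u ≠ v` were not separated by measurable sets, the path measures could
not tell them apart, no third state could lead into `{u, v}`, and irreducibility would fail.
-/

open MeasureTheory Filter

/-- First hitting time of `A` in positive time (the first return time when the chain starts
in `A`): `inf {t ≥ 1 : ω t ∈ A}`. -/
noncomputable def retTime {X : Type*} (A : Set X) (ω : ℕ → X) : ℕ :=
  sInf {t : ℕ | 0 < t ∧ ω t ∈ A}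

open Finset

theorem add_pow_eq_pow_add_sum {R : Type*} [Semiring R] (a c : R) (n : ℕ) :
    (a + c) ^ n = a ^ n + ∑ t ∈ range n, a ^ t * c * (a + c) ^ (n - 1 - t) := by
  induction n with
  | zero => simp
  | succ n ih =>
    rw [pow_succ', add_mul]
    nth_rewrite 1 [ih]
    rw [mul_add, mul_sum, sum_range_succ', ← pow_succ', add_assoc, pow_zero, one_mul]
    congr 2
    refine sum_congr rfl fun t _ => ?_
    rw [show n + 1 - 1 - (t + 1) = n - 1 - t by omega, pow_succ', mul_assoc, mul_assoc,
      mul_assoc]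

namespace Matrix

lemma mul_single_one_mul_apply {l m o R : Type*} [Fintype m] [DecidableEq m] [Semiring R]
    (A : Matrix l m R) (B : Matrix m o R) (u : m) (x : l) (z : o) :
    (A * single u u (1 : R) * B) x z = A x u * B u z := by
  rw [Matrix.mul_assoc, mul_apply, sum_eq_single u (fun c _ hc => by simp [hc]) (by simp)]
  simp

variable {n R : Type*} [Fintype n] [Semiring R] [PartialOrder R] [IsOrderedRing R]

lemma mul_apply_le_mul_apply {A A' B B' : Matrix n n R} (hA : ∀ i j, 0 ≤ A i j)
    (hB : ∀ i j, 0 ≤ B i j) (hAA' : ∀ i j, A i j ≤ A' i j) (hBB' : ∀ i j, B i j ≤ B' i j)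
    (i j : n) : (A * B) i j ≤ (A' * B') i j :=
  sum_le_sum fun c _ => mul_le_mul (hAA' i c) (hBB' c j) (hB c j) ((hA i c).trans (hAA' i c))

lemma pow_apply_le_pow_apply [DecidableEq n] {A B : Matrix n n R} (hA : ∀ i j, 0 ≤ A i j)
    (hAB : ∀ i j, A i j ≤ B i j) (k : ℕ) (i j : n) : (A ^ k) i j ≤ (B ^ k) i j := by
  induction k generalizing i j with
  | zero => rfl
  | succ k ih =>
    rw [pow_succ, pow_succ]
    exact mul_apply_le_mul_apply (pow_apply_nonneg hA k) hA ih hAB i j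

lemma sum_mul_apply_le {A B : Matrix n n R} (hA : ∀ i j, 0 ≤ A i j) {β : R}
    (hB : ∀ c, ∑ b, B c b ≤ β) (x : n) : ∑ b, (A * B) x b ≤ (∑ c, A x c) * β := by
  simp only [mul_apply]
  rw [sum_comm, sum_mul]
  exact sum_le_sum fun c _ => by rw [← mul_sum]; exact mul_le_mul_of_nonneg_left (hB c) (hA x c)

lemma sum_pow_apply_le_pow [DecidableEq n] {M : Matrix n n R} (hM : ∀ i j, 0 ≤ M i j) {c : R}
    (hc0 : 0 ≤ c) (hc : ∀ x, ∑ b, M x b ≤ c) (k : ℕ) (x : n) : ∑ b, (M ^ k) x b ≤ c ^ k := by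
  induction k generalizing x with
  | zero => simp [one_apply]
  | succ k ih =>
    rw [pow_succ, pow_succ]
    exact (sum_mul_apply_le (pow_apply_nonneg hM k) hc x).trans
      (mul_le_mul_of_nonneg_right (ih x) hc0)

end Matrix

lemma MeasureTheory.measure_eq_sum_inter_preimage_singleton {α β : Type*} [MeasurableSpace α]
    [Fintype β] [MeasurableSpace β] [MeasurableSingletonClass β] (μ : Measure α) {f : α → β}
    (hf : Measurable f) (s : Set α) : μ s = ∑ b, μ (s ∩ f ⁻¹' {b}) := by
  have h := sum_measure_preimage_singleton (μ := μ.restrict s) univ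
    fun b _ => hf (measurableSet_singleton b)
  simp only [Measure.restrict_apply (hf (measurableSet_singleton _)), coe_univ,
    Set.preimage_univ, Measure.restrict_apply_univ] at h
  simp_rw [Set.inter_comm s]
  exact h.symm

theorem mul_le_of_hasSum_renewal {l a r : ℕ → ℝ} {L A R B : ℝ} (hl : HasSum l L)
    (ha : HasSum a A) (hr : HasSum r R) (hl0 : ∀ n, 0 ≤ l n)
    (hr0 : ∀ n, 0 ≤ r n) (hRB : R + B ≤ 1)
    (hren : ∀ n, l n ≤ a n + ∑ t ∈ range n, r t * l (n - 1 - t)) : L * B ≤ A := by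
  have hconv : HasSum (fun n => ∑ t ∈ range n, r t * l (n - 1 - t)) (R * L) := by
    have h := hasSum_sum_range_mul_of_summable_norm (f := r) (g := l)
      (hr.summable.congr fun n => (Real.norm_of_nonneg (hr0 n)).symm)
      (hl.summable.congr fun n => (Real.norm_of_nonneg (hl0 n)).symm)
    rw [hr.tsum_eq, hl.tsum_eq] at h
    rw [← hasSum_nat_add_iff' 1]
    simpa using h
  have hL : L ≤ A + R * L := hasSum_le hren hl (ha.add hconv)
  have hL0 : 0 ≤ L := hl.nonneg hl0
  nlinarith

section RetTime

variable {X : Type*} {A : Set X} {ω : ℕ → X} {t : ℕ}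

lemma retTime_le (ht : 0 < t) (hA : ω t ∈ A) : retTime A ω ≤ t := Nat.sInf_le ⟨ht, hA⟩

lemma retTime_spec (h : ∃ t, 0 < t ∧ ω t ∈ A) : 0 < retTime A ω ∧ ω (retTime A ω) ∈ A :=
  Nat.sInf_mem h

lemma notMem_of_lt_retTime (ht : 0 < t) (hlt : t < retTime A ω) : ω t ∉ A :=
  fun hA => (retTime_le ht hA).not_gt hlt

end RetTime

lemma exists_ne_and_ne_of_three {X : Type*} {y y₁ y₂ : X} (h1 : y ≠ y₁) (h2 : y ≠ y₂)
    (h12 : y₁ ≠ y₂) (u v : X) : ∃ x, x ≠ u ∧ x ≠ v := by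
  by_contra! h
  rcases eq_or_ne y u with rfl | hyu
  · exact h12 ((h y₁ h1.symm).trans (h y₂ h2.symm).symm)
  have hyv := h y hyu
  rcases eq_or_ne y₁ u with rfl | h1u
  · exact h2 (hyv.trans (h y₂ h12.symm).symm)
  · exact h1 (hyv.trans (h y₁ h1u).symm)

namespace MarkovChain

variable {X : Type*}

def avoiding (S : Finset X) (n : ℕ) : Set (ℕ → X) := {ω | ∀ i, 0 < i → i ≤ n → ω i ∉ S}

lemma mem_avoiding_of_agree {S : Finset X} {n : ℕ} {ω ω' : ℕ → X} (h : ∀ i ≤ n, ω i = ω' i)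
    (hω : ω ∈ avoiding S n) : ω' ∈ avoiding S n :=
  fun i hi hin => h i hin ▸ hω i hi hin

lemma pairwise_disjoint_avoiding_inter {S : Finset X} {z : X} (hz : z ∈ S) :
    Pairwise (Function.onFun Disjoint fun n => avoiding S n ∩ {ω | ω (n + 1) = z}) := by
  refine pairwise_disjoint_on _ |>.2 fun m n hmn => Set.disjoint_left.2 fun ω hm hn => ?_
  exact hn.1 (m + 1) m.succ_pos hmn (hm.2 ▸ hz)

lemma retTime_lt_retTime_iff [DecidableEq X] {z w : X} (hzw : z ≠ w) {ω : ℕ → X}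
    (hz : ∃ t, 0 < t ∧ ω t = z) (hw : ∃ t, 0 < t ∧ ω t = w) :
    retTime {z} ω < retTime {w} ω ↔ ∃ n, ω ∈ avoiding {z, w} n ∩ {ω | ω (n + 1) = z} := by
  obtain ⟨hτz, hωz⟩ := retTime_spec (A := {z}) hz
  obtain ⟨hτw, hωw⟩ := retTime_spec (A := {w}) hw
  constructor
  · intro h
    refine ⟨retTime {z} ω - 1, fun i hi hin hmem => ?_, by rwa [Nat.sub_add_cancel hτz]⟩
    rcases mem_insert.1 hmem with hiz | hiw
    · exact notMem_of_lt_retTime (A := {z}) hi (by omega) hiz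
    · exact notMem_of_lt_retTime (A := {w}) hi (by omega) (mem_singleton.1 hiw)
  · rintro ⟨n, hav, hn⟩
    have hτz_le : retTime {z} ω ≤ n + 1 := retTime_le n.succ_pos hn
    by_contra! h
    rcases Nat.lt_or_eq_of_le (h.trans hτz_le) with hlt | heq
    · exact hav _ hτw (by omega) (mem_insert_of_mem (mem_singleton.2 hωw))
    · exact hzw (hn.symm.trans (heq ▸ hωw))

section Matrix

variable [DecidableEq X] {p : Matrix X X ℝ} {S T : Finset X}

/-- The transition matrix of the chain killed on entering `S`. -/
def killed (p : Matrix X X ℝ) (S : Finset X) : Matrix X X ℝ :=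
  Matrix.of fun a b => if b ∈ S then 0 else p a b

@[simp] lemma killed_apply (a b : X) : killed p S a b = if b ∈ S then 0 else p a b := rfl

@[simp] lemma killed_empty : killed p ∅ = p := by ext; simp

lemma killed_nonneg (hp : ∀ a b, 0 ≤ p a b) (a b : X) : 0 ≤ killed p S a b := by
  rw [killed_apply]; split_ifs <;> simp [hp]

lemma killed_le (hp : ∀ a b, 0 ≤ p a b) (a b : X) : killed p S a b ≤ p a b := by
  rw [killed_apply]; split_ifs <;> simp [hp]

lemma killed_anti (hp : ∀ a b, 0 ≤ p a b) (hST : S ⊆ T) (a b : X) :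
    killed p T a b ≤ killed p S a b := by
  simp only [killed_apply]
  split_ifs with hT hS hS <;> first | rfl | exact hp a b | exact absurd (hST hS) hT

variable [Fintype X]

lemma killed_eq_killed_insert_add {u : X} (hu : u ∉ S) :
    killed p S = killed p (insert u S) + p * Matrix.single u u 1 := by
  ext a b
  by_cases hb : b = u
  · subst hb; simp [hu]
  · simp [hb]

/-- The probability that the chain started at `x` enters `S` for the first time at time
`n + 1`, and does so at `z`. -/
def entrance (p : Matrix X X ℝ) (S : Finset X) (n : ℕ) (x z : X) : ℝ :=
  (killed p S ^ n * p) x z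

lemma entrance_nonneg (hp : ∀ a b, 0 ≤ p a b) (n : ℕ) (x z : X) : 0 ≤ entrance p S n x z :=
  sum_nonneg fun c _ => mul_nonneg (Matrix.pow_apply_nonneg (killed_nonneg hp) n x c) (hp c z)

lemma entrance_anti (hp : ∀ a b, 0 ≤ p a b) (hST : S ⊆ T) (n : ℕ) (x z : X) :
    entrance p T n x z ≤ entrance p S n x z :=
  Matrix.mul_apply_le_mul_apply (Matrix.pow_apply_nonneg (killed_nonneg hp) n) hp
    (Matrix.pow_apply_le_pow_apply (killed_nonneg hp) (killed_anti hp hST) n)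
    (fun _ _ => le_rfl) x z

lemma entrance_empty (n : ℕ) (x z : X) : entrance p ∅ n x z = (p ^ (n + 1)) x z := by
  rw [entrance, killed_empty, pow_succ]

/-- Decomposition according to the first visit to `u` before entering `S`. -/
lemma entrance_eq_add_sum {u : X} (hu : u ∉ S) (m : ℕ) (x z : X) :
    entrance p S m x z = entrance p (insert u S) m x z +
      ∑ t ∈ range m, entrance p (insert u S) t x u * entrance p S (m - 1 - t) u z := by
  have h := congrArg (fun M => (M * p) x z)
    (add_pow_eq_pow_add_sum (killed p (insert u S)) (p * Matrix.single u u 1) m)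
  simp only [← killed_eq_killed_insert_add hu, add_mul, Matrix.add_apply, sum_mul,
    Matrix.sum_apply] at h
  rw [entrance, h]
  congr 1
  refine sum_congr rfl fun t _ => ?_
  rw [show killed p (insert u S) ^ t * (p * Matrix.single u u 1) * killed p S ^ (m - 1 - t) * p
      = killed p (insert u S) ^ t * p * Matrix.single u u 1 * (killed p S ^ (m - 1 - t) * p) by
    simp only [mul_assoc], Matrix.mul_single_one_mul_apply]
  rfl

/-- If `z` could not be reached from `u` before returning to `u`, then by
`entrance_eq_add_sum` it could never be reached. -/
lemma exists_entrance_pos (hp : ∀ a b, 0 ≤ p a b) {u z : X} (huz : u ≠ z)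
    (hreach : ∃ n, 0 < (p ^ n) u z) : ∃ n, 0 < entrance p {u, z} n u z := by
  by_contra! h
  have hz : ∀ n, entrance p {z} n u z = 0 := by
    intro n
    induction n using Nat.strong_induction_on with
    | _ n ih =>
      rw [entrance_eq_add_sum (u := u) (by simpa using huz),
        le_antisymm (h n) (entrance_nonneg hp n u z)]
      refine (zero_add _).trans (sum_eq_zero fun t ht => ?_)
      rw [ih _ (by have := mem_range.1 ht; omega), mul_zero]
  obtain ⟨n, hn⟩ := hreach
  cases n with
  | zero => simp [Matrix.one_apply_ne huz] at hn
  | succ n =>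
    rw [← entrance_empty, entrance_eq_add_sum (u := z) (notMem_empty z), insert_empty, hz] at hn
    simp [hz] at hn

lemma sum_killed_apply_le_one (hp : p ∈ Matrix.rowStochastic ℝ X) (x : X) :
    ∑ b, killed p S x b ≤ 1 :=
  (sum_le_sum fun b _ => killed_le ((Matrix.mem_rowStochastic.1 hp).1) x b).trans
    (Matrix.sum_row_of_mem_rowStochastic hp x).le

lemma sum_killed_pow_apply_antitone (hp : p ∈ Matrix.rowStochastic ℝ X) (x : X) :
    Antitone fun n => ∑ b, (killed p S ^ n) x b := by
  have hQ := killed_nonneg (S := S) (Matrix.mem_rowStochastic.1 hp).1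
  refine antitone_nat_of_succ_le fun n => ?_
  rw [pow_succ]
  simpa using Matrix.sum_mul_apply_le (Matrix.pow_apply_nonneg hQ n)
    (sum_killed_apply_le_one hp) x

lemma sum_killed_pow_apply_le_one_sub (hp : p ∈ Matrix.rowStochastic ℝ X) {z : X} (hz : z ∈ S)
    {n : ℕ} (hn : 0 < n) (x : X) : ∑ b, (killed p S ^ n) x b ≤ 1 - (p ^ n) x z := by
  have hnn := (Matrix.mem_rowStochastic.1 hp).1
  have hzero : (killed p S ^ n) x z = 0 := by
    obtain ⟨k, rfl⟩ := Nat.exists_eq_add_of_lt hn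
    simp [pow_succ, Matrix.mul_apply, hz]
  rw [← Matrix.sum_row_of_mem_rowStochastic (pow_mem hp n) x, ← add_sum_erase _ _ (mem_univ z),
    ← add_sum_erase _ _ (mem_univ z), hzero, zero_add, add_sub_cancel_left]
  exact sum_le_sum fun b _ =>
    Matrix.pow_apply_le_pow_apply (killed_nonneg hnn) (killed_le hnn) n x b

/-- Some power of the killed matrix has all row sums at most `1 - δ < 1`, so its powers decay
geometrically. -/
lemma exists_sum_killed_pow_apply_le (hp : p ∈ Matrix.rowStochastic ℝ X) {z : X}
    (hz : ∀ x, ∃ n, 0 < n ∧ 0 < (p ^ n) x z) {ε : ℝ} (hε : 0 < ε) :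
    ∃ n, ∀ x, ∑ b, (killed p {z} ^ n) x b ≤ ε := by
  choose m hm0 hmz using hz
  obtain ⟨x₀, -, hx₀⟩ := (univ : Finset X).exists_min_image (fun x => (p ^ m x) x z) ⟨z, mem_univ z⟩
  set δ := (p ^ m x₀) x₀ z
  have hδ : ∀ x, ∑ b, (killed p {z} ^ (univ.sup m)) x b ≤ 1 - δ := fun x =>
    (sum_killed_pow_apply_antitone hp x (le_sup (mem_univ x))).trans
      ((sum_killed_pow_apply_le_one_sub hp (mem_singleton_self z) (hm0 x) x).trans
        (sub_le_sub_left (hx₀ x (mem_univ x)) 1))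
  obtain ⟨k, hk⟩ := exists_pow_lt_of_lt_one hε (sub_lt_self 1 (hmz x₀))
  refine ⟨univ.sup m * k, fun x => ?_⟩
  rw [pow_mul]
  exact (Matrix.sum_pow_apply_le_pow
    (Matrix.pow_apply_nonneg (killed_nonneg (Matrix.mem_rowStochastic.1 hp).1) _)
    (sub_nonneg.2 (Matrix.le_one_of_mem_rowStochastic (pow_mem hp _))) hδ k x).trans hk.le

lemma exists_pos_pow_apply_pos [Nontrivial X] (hp : ∀ a b, 0 ≤ p a b)
    (hirr : ∀ a b : X, ∃ n, 0 < (p ^ n) a b) (x z : X) : ∃ n, 0 < n ∧ 0 < (p ^ n) x z := by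
  have hpos : ∀ {a b : X}, a ≠ b → ∃ n, 0 < n ∧ 0 < (p ^ n) a b := fun {a b} hab => by
    obtain ⟨n, hn⟩ := hirr a b
    refine ⟨n, Nat.pos_of_ne_zero fun h => ?_, hn⟩
    simp [h, Matrix.one_apply_ne hab] at hn
  rcases ne_or_eq x z with hxz | rfl
  · exact hpos hxz
  obtain ⟨w, hw⟩ := exists_ne x
  obtain ⟨m, hm, hxw⟩ := hpos hw.symm
  obtain ⟨n, -, hwx⟩ := hpos hw
  refine ⟨m + n, by omega, (mul_pos hxw hwx).trans_le ?_⟩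
  rw [pow_add, Matrix.mul_apply]
  exact single_le_sum (fun c _ => mul_nonneg (Matrix.pow_apply_nonneg hp m x c)
    (Matrix.pow_apply_nonneg hp n c x)) (mem_univ w)

lemma entrance_le_add_sum (hp : ∀ a b, 0 ≤ p a b) {y y₁ y₂ : X} (h1 : y ≠ y₁) (h2 : y ≠ y₂)
    (n : ℕ) : entrance p {y₁, y₂} n y y₁ ≤ entrance p {y₁, y} n y y₁ +
      ∑ t ∈ range n, entrance p {y, y₂} t y y * entrance p {y₁, y₂} (n - 1 - t) y y₁ := by
  have hy : y ∉ ({y₁, y₂} : Finset X) := by simp [h1, h2]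
  rw [entrance_eq_add_sum hy]
  refine add_le_add (entrance_anti hp ?_ n y y₁) (sum_le_sum fun t _ =>
    mul_le_mul_of_nonneg_right (entrance_anti hp ?_ t y y) (entrance_nonneg hp _ _ _)) <;>
  · intro a
    simp only [mem_insert, mem_singleton]
    tauto

end Matrix

section Measurability

variable [MeasurableSpace X]

/-- The cylinder sets of `Q` carry the weights of the Markov chain with transition matrix `p`
started at `x`. -/
def IsMarkovLaw (p : Matrix X X ℝ) (x : X) (Q : Measure (ℕ → X)) : Prop :=
  ∀ (n : ℕ) (f : ℕ → X), f 0 = x →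
    Q {ω | ∀ i ≤ n, ω i = f i} = ∏ i ∈ range n, ENNReal.ofReal (p (f i) (f (i + 1)))

lemma preimage_comp_swap_eq [DecidableEq X] {u v : X}
    (hsep : ∀ s, MeasurableSet s → (u ∈ s ↔ v ∈ s)) {M : Set (ℕ → X)} (hM : MeasurableSet M) :
    (fun ω => Equiv.swap u v ∘ ω) ⁻¹' M = M := by
  have hle : MeasurableSpace.pi ≤
      MeasurableSpace.invariants (fun ω : ℕ → X => Equiv.swap u v ∘ ω) := by
    refine iSup_le fun i => MeasurableSpace.comap_le_iff_le_map.2 fun s hs =>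
      ⟨measurable_pi_apply i hs, ?_⟩
    ext ω
    simp only [Set.mem_preimage, Function.comp_apply, Equiv.swap_apply_def]
    split_ifs with hu hv
    · rw [hu, hsep s hs]
    · rw [hv, hsep s hs]
    · rfl
  exact (hle M hM).2

lemma retTime_lt_ae_eq [DecidableEq X] {Q : Measure (ℕ → X)} {z w : X} (hzw : z ≠ w)
    (hz : ∀ᵐ ω ∂Q, ∃ t, 0 < t ∧ ω t = z) (hw : ∀ᵐ ω ∂Q, ∃ t, 0 < t ∧ ω t = w) :
    {ω | retTime {z} ω < retTime {w} ω} =ᵐ[Q] ⋃ n, avoiding {z, w} n ∩ {ω | ω (n + 1) = z} := by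
  filter_upwards [hz, hw] with ω hωz hωw
  change (ω ∈ {ω | _}) = (ω ∈ ⋃ n, _)
  rw [Set.mem_iUnion, eq_iff_iff]
  exact retTime_lt_retTime_iff hzw hωz hωw

variable [Fintype X] [DecidableEq X] {p : Matrix X X ℝ}

/-- The cylinder `{ω 0 = x, ω 1 = v}` lies in the measurable hull of `{ω 0 = x, ω 1 = u}`, so the
hulls of the cylinders `{ω 0 = x, ω 1 = b}` with `b ≠ v` cover `{ω 0 = x}`. -/
lemma apply_eq_zero_of_forall_measurableSet_iff (hp : p ∈ Matrix.rowStochastic ℝ X)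
    {x u v : X} {Q : Measure (ℕ → X)} [IsProbabilityMeasure Q] (hQ : IsMarkovLaw p x Q)
    (huv : u ≠ v) (hxu : x ≠ u) (hxv : x ≠ v)
    (hsep : ∀ s, MeasurableSet s → (u ∈ s ↔ v ∈ s)) : p x v = 0 := by
  set C : X → Set (ℕ → X) := fun b => {ω | ∀ i ≤ 1, ω i = Function.update (fun _ => x) 1 b i}
  have hC : ∀ b, Q (C b) = ENNReal.ofReal (p x b) := fun b => by
    simp [C, hQ 1 _ (by simp : Function.update (fun _ => x) 1 b 0 = x)]
  have hstart : Q {ω | ∀ i ≤ 0, ω i = x} = 1 := by simpa using hQ 0 (fun _ => x) rfl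
  have hvu : C v ⊆ toMeasurable Q (C u) := fun ω hω => by
    rw [← preimage_comp_swap_eq hsep (measurableSet_toMeasurable Q (C u))]
    refine subset_toMeasurable Q (C u) fun i hi => ?_
    interval_cases i <;> simp [hω 0 (by omega), hω 1 le_rfl, Equiv.swap_apply_of_ne_of_ne hxu hxv]
  have hcover : {ω | ∀ i ≤ 0, ω i = x} ⊆ ⋃ b ∈ univ.erase v, toMeasurable Q (C b) :=
    fun ω hω => by
    have hC : ω ∈ C (ω 1) := fun i hi => by
      interval_cases i <;> simp [hω 0 le_rfl]
    by_cases h1 : ω 1 = v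
    · exact Set.mem_biUnion (mem_erase.2 ⟨huv, mem_univ u⟩) (hvu (h1 ▸ hC))
    · exact Set.mem_biUnion (mem_erase.2 ⟨h1, mem_univ _⟩) (subset_toMeasurable Q _ hC)
  have hle : (1 : ENNReal) ≤ ENNReal.ofReal (1 - p x v) := calc
    1 = Q {ω | ∀ i ≤ 0, ω i = x} := hstart.symm
    _ ≤ ∑ b ∈ univ.erase v, Q (toMeasurable Q (C b)) :=
      (measure_mono hcover).trans (measure_biUnion_finset_le _ _)
    _ = ENNReal.ofReal (∑ b ∈ univ.erase v, p x b) := by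
      simp_rw [measure_toMeasurable, hC]
      exact (ENNReal.ofReal_sum_of_nonneg fun b _ => (Matrix.mem_rowStochastic.1 hp).1 x b).symm
    _ = ENNReal.ofReal (1 - p x v) := by
      rw [← Matrix.sum_row_of_mem_rowStochastic hp x, ← add_sum_erase _ _ (mem_univ v),
        add_sub_cancel_left]
  have := (Matrix.mem_rowStochastic.1 hp).1 x v
  rw [ENNReal.one_le_ofReal] at hle
  linarith

lemma separatesPoints_of_isMarkovLaw (hp : p ∈ Matrix.rowStochastic ℝ X) {P : X → Measure (ℕ → X)}
    [∀ x, IsProbabilityMeasure (P x)] (hP : ∀ x, IsMarkovLaw p x (P x))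
    (hirr : ∀ a b : X, ∃ n, 0 < (p ^ n) a b) (h3 : ∀ u v : X, ∃ x, x ≠ u ∧ x ≠ v) :
    MeasurableSpace.SeparatesPoints X := by
  refine MeasurableSpace.separatesPoints_iff.2 fun u v hsep => ?_
  by_contra huv
  have hstep : ∀ c d, c ≠ u → c ≠ v → (d = u ∨ d = v) → p c d = 0 := by
    rintro c d hcu hcv (rfl | rfl)
    · exact apply_eq_zero_of_forall_measurableSet_iff hp (hP c) (Ne.symm huv) hcv hcu
        fun s hs => (hsep s hs).symm
    · exact apply_eq_zero_of_forall_measurableSet_iff hp (hP c) huv hcu hcv hsep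
  have hpow : ∀ n c, c ≠ u → c ≠ v → (p ^ n) c u = 0 := by
    intro n
    induction n with
    | zero => intro c hcu _; exact Matrix.one_apply_ne hcu
    | succ n ih =>
      intro c hcu hcv
      rw [pow_succ', Matrix.mul_apply]
      refine sum_eq_zero fun e _ => ?_
      by_cases he : e = u ∨ e = v
      · rw [hstep c e hcu hcv he, zero_mul]
      · obtain ⟨heu, hev⟩ := not_or.1 he
        rw [ih e heu hev, mul_zero]
  obtain ⟨x, hxu, hxv⟩ := h3 u v
  obtain ⟨n, hn⟩ := hirr x u
  exact hn.ne' (hpow n x hxu hxv)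

end Measurability

section PathMeasure

variable [MeasurableSpace X] [DiscreteMeasurableSpace X]

lemma measurableSet_coord (i : ℕ) (s : Set X) : MeasurableSet {ω : ℕ → X | ω i ∈ s} :=
  measurable_pi_apply i MeasurableSet.of_discrete

lemma measurableSet_avoiding (S : Finset X) (n : ℕ) : MeasurableSet (avoiding S n) := by
  simp only [avoiding, Set.ofPred_forall]
  exact .iInter fun i => .iInter fun _ => .iInter fun _ => measurableSet_coord i (S : Set X)ᶜ

lemma toReal_measure_retTime_lt_add_le_one [DecidableEq X] {Q : Measure (ℕ → X)}
    [IsProbabilityMeasure Q] {z w : X} (hzw : z ≠ w)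
    (hz : ∀ᵐ ω ∂Q, ∃ t, 0 < t ∧ ω t = z) (hw : ∀ᵐ ω ∂Q, ∃ t, 0 < t ∧ ω t = w) :
    (Q {ω | retTime {z} ω < retTime {w} ω}).toReal +
      (Q {ω | retTime {w} ω < retTime {z} ω}).toReal ≤ 1 := by
  have hnull : NullMeasurableSet {ω | retTime {w} ω < retTime {z} ω} Q :=
    (MeasurableSet.iUnion fun n => (measurableSet_avoiding _ n).inter
      (measurableSet_coord (n + 1) {w})).nullMeasurableSet.congr
      (retTime_lt_ae_eq hzw.symm hw hz).symm
  have hdisj : Disjoint {ω | retTime {z} ω < retTime {w} ω} {ω | retTime {w} ω < retTime {z} ω} :=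
    Set.disjoint_left.2 fun _ h h' => lt_asymm (α := ℕ) h h'
  rw [← ENNReal.toReal_add (measure_ne_top Q _) (measure_ne_top Q _),
    ← measure_union₀ hnull hdisj.aedisjoint]
  exact ENNReal.toReal_le_of_le_ofReal zero_le_one (by simpa using prob_le_one)

variable {p : Matrix X X ℝ} {x : X} {Q : Measure (ℕ → X)} [IsProbabilityMeasure Q]

lemma IsMarkovLaw.ae_start (hQ : IsMarkovLaw p x Q) : ∀ᵐ ω ∂Q, ω 0 = x := by
  have h : Q {ω | ω 0 = x} = 1 := by simpa using hQ 0 (fun _ => x) rfl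
  rw [ae_iff]
  exact (prob_compl_eq_zero_iff (measurableSet_coord 0 {x})).2 h

lemma IsMarkovLaw.measure_cylinder_succ (hQ : IsMarkovLaw p x Q) (n : ℕ) (f : ℕ → X) :
    Q {ω | ∀ i ≤ n + 1, ω i = f i} =
      Q {ω | ∀ i ≤ n, ω i = f i} * ENNReal.ofReal (p (f n) (f (n + 1))) := by
  by_cases hf : f 0 = x
  · rw [hQ _ _ hf, hQ _ _ hf, prod_range_succ]
  · have hnull : ∀ m, Q {ω | ∀ i ≤ m, ω i = f i} = 0 := fun m =>
      measure_mono_null (fun ω hω h0 => hf (hω 0 (Nat.zero_le m) ▸ h0)) (ae_iff.1 hQ.ae_start)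
    rw [hnull, hnull, zero_mul]

lemma IsMarkovLaw.measure_cylinder_inter (hQ : IsMarkovLaw p x Q) (n : ℕ) (f : ℕ → X) (c : X) :
    Q ({ω | ∀ i ≤ n, ω i = f i} ∩ {ω | ω (n + 1) = c}) =
      Q {ω | ∀ i ≤ n, ω i = f i} * ENNReal.ofReal (p (f n) c) := by
  set g := Function.update f (n + 1) c
  have hg : ∀ i ≤ n, g i = f i := fun i hi => Function.update_of_ne (by omega) _ _
  have hcyl : {ω : ℕ → X | ∀ i ≤ n, ω i = f i} ∩ {ω | ω (n + 1) = c} =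
      {ω | ∀ i ≤ n + 1, ω i = g i} := by
    ext ω
    refine ⟨fun ⟨hω, hc⟩ i hi => ?_, fun hω => ⟨fun i hi => (hω i (by omega)).trans (hg i hi),
      by simpa [g] using hω (n + 1) le_rfl⟩⟩
    rcases Nat.lt_or_eq_of_le hi with hi | rfl
    · rw [hg i (by omega)]; exact hω i (by omega)
    · simpa [g] using hc
  have hcyl' : {ω : ℕ → X | ∀ i ≤ n, ω i = g i} = {ω | ∀ i ≤ n, ω i = f i} := by
    ext ω
    exact forall₂_congr fun i hi => by rw [hg i hi]
  rw [hcyl, hQ.measure_cylinder_succ, hcyl', hg n le_rfl, show g (n + 1) = c by simp [g]]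

variable [Fintype X]

/-- The Markov property at time `n`. -/
lemma IsMarkovLaw.measure_inter_eq_mul (hQ : IsMarkovLaw p x Q) {n : ℕ} {E : Set (ℕ → X)}
    (hE : ∀ ω ω', (∀ i ≤ n, ω i = ω' i) → ω ∈ E → ω' ∈ E) {b : X} (hEb : ∀ ω ∈ E, ω n = b)
    (c : X) : Q (E ∩ {ω | ω (n + 1) = c}) = Q E * ENNReal.ofReal (p b c) := by
  set r : (ℕ → X) → (Fin (n + 1) → X) := fun ω i => ω i
  have hr : Measurable r := measurable_pi_lambda _ fun i => measurable_pi_apply _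
  rw [measure_eq_sum_inter_preimage_singleton Q hr, measure_eq_sum_inter_preimage_singleton Q hr E,
    sum_mul]
  refine sum_congr rfl fun g _ => ?_
  rcases (E ∩ r ⁻¹' {g}).eq_empty_or_nonempty with hempty | ⟨ω₀, hω₀E, hω₀g⟩
  · rw [Set.inter_right_comm, hempty, Set.empty_inter, measure_empty, zero_mul]
  have hcyl : E ∩ r ⁻¹' {g} = {ω | ∀ i ≤ n, ω i = ω₀ i} := by
    ext ω
    refine ⟨fun ⟨_, hωg⟩ i hi => ?_, fun hω => ⟨hE ω₀ ω (fun i hi => (hω i hi).symm) hω₀E, ?_⟩⟩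
    · exact congrFun (hωg.trans hω₀g.symm) ⟨i, Nat.lt_succ_of_le hi⟩
    · exact (funext fun i : Fin (n + 1) => hω i (Nat.le_of_lt_succ i.isLt)).trans hω₀g
  rw [Set.inter_right_comm, hcyl, hQ.measure_cylinder_inter, hEb ω₀ hω₀E]

lemma IsMarkovLaw.measure_inter_succ (hp : ∀ a b, 0 ≤ p a b) (hQ : IsMarkovLaw p x Q) {n : ℕ}
    {F : Set (ℕ → X)} (hF : ∀ ω ω', (∀ i ≤ n, ω i = ω' i) → ω ∈ F → ω' ∈ F) {v : X → ℝ}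
    (hv0 : ∀ b, 0 ≤ v b) (hv : ∀ b, Q (F ∩ {ω | ω n = b}) = ENNReal.ofReal (v b)) (c : X) :
    Q (F ∩ {ω | ω (n + 1) = c}) = ENNReal.ofReal (∑ b, v b * p b c) := by
  rw [measure_eq_sum_inter_preimage_singleton Q (measurable_pi_apply n),
    ENNReal.ofReal_sum_of_nonneg fun b _ => mul_nonneg (hv0 b) (hp b c)]
  refine sum_congr rfl fun b _ => ?_
  rw [Set.inter_right_comm, ENNReal.ofReal_mul (hv0 b), ← hv b]
  exact hQ.measure_inter_eq_mul (E := F ∩ {ω | ω n = b})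
    (fun ω ω' h hω => ⟨hF ω ω' h hω.1, (h n le_rfl).symm.trans hω.2⟩) (fun _ hω => hω.2) c

variable [DecidableEq X]

lemma IsMarkovLaw.measure_avoiding_inter (hp : ∀ a b, 0 ≤ p a b) (hQ : IsMarkovLaw p x Q)
    (S : Finset X) (n : ℕ) (b : X) :
    Q (avoiding S n ∩ {ω | ω n = b}) = ENNReal.ofReal ((killed p S ^ n) x b) := by
  induction n generalizing b with
  | zero =>
    have hall : avoiding S 0 = Set.univ := Set.eq_univ_of_forall fun ω i hi hi0 => by omega
    rw [hall, Set.univ_inter, pow_zero]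
    rcases eq_or_ne x b with rfl | hxb
    · simpa using hQ 0 (fun _ => x) rfl
    · rw [Matrix.one_apply_ne hxb, ENNReal.ofReal_zero]
      exact measure_mono_null (fun ω (hω : ω 0 = b) (h0 : ω 0 = x) => hxb (h0.symm.trans hω))
        (ae_iff.1 hQ.ae_start)
  | succ n ih =>
    by_cases hb : b ∈ S
    · have hempty : avoiding S (n + 1) ∩ {ω | ω (n + 1) = b} = ∅ :=
        Set.eq_empty_of_forall_notMem fun ω ⟨hω, hωb⟩ => hω (n + 1) n.succ_pos le_rfl (hωb ▸ hb)
      simp [hempty, pow_succ, Matrix.mul_apply, hb]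
    · have hset : avoiding S (n + 1) ∩ {ω | ω (n + 1) = b} =
          avoiding S n ∩ {ω | ω (n + 1) = b} := by
        ext ω
        refine ⟨fun ⟨hω, hωb⟩ => ⟨fun i hi hin => hω i hi (by omega), hωb⟩,
          fun ⟨hω, hωb⟩ => ⟨fun i hi hin => ?_, hωb⟩⟩
        rcases Nat.lt_or_eq_of_le hin with hin | rfl
        · exact hω i hi (by omega)
        · exact hωb ▸ hb
      rw [hset, hQ.measure_inter_succ hp (fun _ _ h => mem_avoiding_of_agree h)
        (fun c => Matrix.pow_apply_nonneg (killed_nonneg hp) n x c) ih, pow_succ]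
      simp [Matrix.mul_apply, hb]

lemma IsMarkovLaw.measure_avoiding (hp : ∀ a b, 0 ≤ p a b) (hQ : IsMarkovLaw p x Q)
    (S : Finset X) (n : ℕ) : Q (avoiding S n) = ENNReal.ofReal (∑ b, (killed p S ^ n) x b) := by
  rw [measure_eq_sum_inter_preimage_singleton Q (measurable_pi_apply n),
    ENNReal.ofReal_sum_of_nonneg fun b _ => Matrix.pow_apply_nonneg (killed_nonneg hp) n x b]
  exact sum_congr rfl fun b _ => hQ.measure_avoiding_inter hp S n b

lemma IsMarkovLaw.measure_avoiding_inter_succ (hp : ∀ a b, 0 ≤ p a b) (hQ : IsMarkovLaw p x Q)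
    (S : Finset X) (n : ℕ) (z : X) :
    Q (avoiding S n ∩ {ω | ω (n + 1) = z}) = ENNReal.ofReal (entrance p S n x z) :=
  hQ.measure_inter_succ hp (fun _ _ h => mem_avoiding_of_agree h)
    (fun c => Matrix.pow_apply_nonneg (killed_nonneg hp) n x c) (hQ.measure_avoiding_inter hp S n) z

lemma IsMarkovLaw.ae_exists_hit (hp : p ∈ Matrix.rowStochastic ℝ X) (hQ : IsMarkovLaw p x Q)
    {z : X} (hz : ∀ a, ∃ n, 0 < n ∧ 0 < (p ^ n) a z) : ∀ᵐ ω ∂Q, ∃ t, 0 < t ∧ ω t = z := by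
  refine ae_iff.2 (le_antisymm (ENNReal.le_of_forall_pos_le_add fun ε hε _ => ?_) bot_le)
  obtain ⟨n, hn⟩ := exists_sum_killed_pow_apply_le hp hz (ε := ε) hε
  calc Q {ω | ¬∃ t, 0 < t ∧ ω t = z}
      ≤ Q (avoiding {z} n) := measure_mono fun ω hω i hi _ hiz =>
        hω ⟨i, hi, mem_singleton.1 hiz⟩
    _ = ENNReal.ofReal (∑ b, (killed p {z} ^ n) x b) :=
        hQ.measure_avoiding (Matrix.mem_rowStochastic.1 hp).1 {z} n
    _ ≤ 0 + ε := by
        rw [zero_add, ← ENNReal.ofReal_coe_nnreal]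
        exact ENNReal.ofReal_le_ofReal (hn x)

lemma IsMarkovLaw.hasSum_entrance {z w : X} (hp : ∀ a b, 0 ≤ p a b) (hQ : IsMarkovLaw p x Q)
    (hzw : z ≠ w) (hz : ∀ᵐ ω ∂Q, ∃ t, 0 < t ∧ ω t = z) (hw : ∀ᵐ ω ∂Q, ∃ t, 0 < t ∧ ω t = w) :
    HasSum (fun n => entrance p {z, w} n x z) (Q {ω | retTime {z} ω < retTime {w} ω}).toReal := by
  have hQz : Q {ω | retTime {z} ω < retTime {w} ω} =
      ∑' n, ENNReal.ofReal (entrance p {z, w} n x z) := by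
    rw [measure_congr (retTime_lt_ae_eq hzw hz hw),
      measure_iUnion (pairwise_disjoint_avoiding_inter (mem_insert_self z {w}))
        fun n => (measurableSet_avoiding _ n).inter (measurableSet_coord (n + 1) {z})]
    simp_rw [hQ.measure_avoiding_inter_succ hp]
  have hsum := ENNReal.summable_toReal (hQz ▸ measure_ne_top Q _)
  rw [hQz, ENNReal.tsum_toReal_eq fun _ => ENNReal.ofReal_ne_top]
  simpa [ENNReal.toReal_ofReal (entrance_nonneg hp _ x z)] using hsum.hasSum

end PathMeasure

end MarkovChain

open MarkovChain

theorem stmt4_general {X : Type*} [Fintype X] [DecidableEq X] [MeasurableSpace X]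
    (p : Matrix X X ℝ) (μ : X → ℝ)
    (hnn : ∀ a b, 0 ≤ p a b) (hrow : ∀ a, ∑ b, p a b = 1)
    (hirr : ∀ a b : X, ∃ n : ℕ, 0 < (p ^ n) a b)
    (hμpos : ∀ x, 0 < μ x)
    (P : X → Measure (ℕ → X)) (hprob : ∀ x, IsProbabilityMeasure (P x))
    (hP : ∀ (x : X) (n : ℕ) (f : ℕ → X), f 0 = x →
      P x {ω | ∀ i ≤ n, ω i = f i}
        = ∏ i ∈ Finset.range n, ENNReal.ofReal (p (f i) (f (i+1))))
    (y y₁ y₂ : X) (h1 : y ≠ y₁) (h2 : y ≠ y₂) (h12 : y₁ ≠ y₂) :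
    (P y {ω | retTime {y₁} ω < retTime {y₂} ω}).toReal
      ≤ (μ y * (P y {ω | retTime {y₁} ω < retTime {y} ω}).toReal)
        / (μ y * (P y {ω | retTime {y₂} ω < retTime {y} ω}).toReal) := by
  have hstoch : p ∈ Matrix.rowStochastic ℝ X := Matrix.mem_rowStochastic_iff_sum.2 ⟨hnn, hrow⟩
  have : Nontrivial X := ⟨⟨y, y₁, h1⟩⟩
  have := separatesPoints_of_isMarkovLaw hstoch hP hirr (exists_ne_and_ne_of_three h1 h2 h12)
  have hQ : IsMarkovLaw p y (P y) := hP y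
  have hit : ∀ z, ∀ᵐ ω ∂P y, ∃ t, 0 < t ∧ ω t = z := fun z =>
    hQ.ae_exists_hit hstoch fun x => exists_pos_pow_apply_pos hnn hirr x z
  have hℓ := hQ.hasSum_entrance hnn h12 (hit y₁) (hit y₂)
  have ha := hQ.hasSum_entrance hnn h1.symm (hit y₁) (hit y)
  have hb := hQ.hasSum_entrance hnn h2.symm (hit y₂) (hit y)
  have hr := hQ.hasSum_entrance hnn h2 (hit y) (hit y₂)
  have hb0 : 0 < (P y {ω | retTime {y₂} ω < retTime {y} ω}).toReal := by
    obtain ⟨n, hn⟩ := exists_entrance_pos hnn h2 (hirr y y₂)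
    rw [Finset.pair_comm] at hn
    exact hasSum_lt (f := 0) (fun m => entrance_nonneg hnn m y y₂) hn hasSum_zero hb
  rw [mul_div_mul_left _ _ (hμpos y).ne', le_div_iff₀ hb0]
  exact mul_le_of_hasSum_renewal hℓ ha hr (fun n => entrance_nonneg hnn n y y₁)
    (fun n => entrance_nonneg hnn n y y)
    (toReal_measure_retTime_lt_add_le_one h2 (hit y) (hit y₂)) (entrance_le_add_sum hnn h1 h2)

/-- For an irreducible Markov chain on a finite state space, reversible with
respect to `μ`, and pairwise distinct states `y, y₁, y₂`:
`P_y(τ_{y₁} < τ_{y₂}) ≤ cap(y,y₁)/cap(y,y₂)` where `cap(z,w) = μ(z)·P_z(τ_w < τ_z⁺)`. -/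
theorem stmt4 {X : Type*} [Fintype X] [DecidableEq X] [MeasurableSpace X]
    (p : Matrix X X ℝ) (μ : X → ℝ)
    (hnn : ∀ a b, 0 ≤ p a b) (hrow : ∀ a, ∑ b, p a b = 1)
    (hirr : ∀ a b : X, ∃ n : ℕ, 0 < (p ^ n) a b)
    (hμpos : ∀ x, 0 < μ x) (hμsum : ∑ x, μ x = 1)
    -- reversibility :
    (hrev : ∀ a b : X, μ a * p a b = μ b * p b a)
    (P : X → Measure (ℕ → X)) (hprob : ∀ x, IsProbabilityMeasure (P x))
    (hP : ∀ (x : X) (n : ℕ) (f : ℕ → X), f 0 = x →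
      P x {ω | ∀ i ≤ n, ω i = f i}
        = ∏ i ∈ Finset.range n, ENNReal.ofReal (p (f i) (f (i+1))))
    (y y₁ y₂ : X) (h1 : y ≠ y₁) (h2 : y ≠ y₂) (h12 : y₁ ≠ y₂) :
    (P y {ω | retTime {y₁} ω < retTime {y₂} ω}).toReal
      ≤ (μ y * (P y {ω | retTime {y₁} ω < retTime {y} ω}).toReal)
        / (μ y * (P y {ω | retTime {y₂} ω < retTime {y} ω}).toReal) :=
  stmt4_general p μ hnn hrow hirr hμpos P hprob hP y y₁ y₂ h1 h2 h12
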